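/- arXiv:1202.5120 — 3 statements merged into one kernel-verified Lean document; each statement's English description precedes it below -/
import Mathlib

section
/- Let A be an algebra and S a set of self-adjoint half-commuting elements (abc = cba for a,b,c ∈ S). Then the subalgebra generated by all products ab with a,b ∈ S is commutative. -/
/-! For `a, b, c, d ∈ S`, two applications of `xyz = zyx` give
`ab·cd = a·dcb = cd·ab`, so the generators `ab` commute pairwise, and a subalgebra generated by
pairwise commuting elements lies in the (commutative) double centralizer of its generators. -/

theorem commute_mul_mul_of_half_commute {M : Type*} [Semigroup M] {S : Set M}
    (hhalf : ∀ a ∈ S, ∀ b ∈ S, ∀ c ∈ S, a * b * c = c * b * a)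
    {a b c d : M} (ha : a ∈ S) (hb : b ∈ S) (hc : c ∈ S) (hd : d ∈ S) :
    Commute (a * b) (c * d) :=
  calc a * b * (c * d) = a * (b * c * d) := by simp only [mul_assoc]
    _ = a * d * c * b := by rw [hhalf b hb c hc d hd]; simp only [mul_assoc]
    _ = c * d * (a * b) := by rw [hhalf a ha d hd c hc]; simp only [mul_assoc]

theorem half_commute_even_subalgebra_commutative_general
    (A : Type*) [Ring A] [Algebra ℂ A] (S : Set A)
    (hhalf : ∀ a ∈ S, ∀ b ∈ S, ∀ c ∈ S, a * b * c = c * b * a) :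
    ∀ x ∈ Algebra.adjoin ℂ {p : A | ∃ a ∈ S, ∃ b ∈ S, p = a * b},
      ∀ y ∈ Algebra.adjoin ℂ {p : A | ∃ a ∈ S, ∃ b ∈ S, p = a * b},
        x * y = y * x := by
  set P := {p : A | ∃ a ∈ S, ∃ b ∈ S, p = a * b}
  have hgen : ∀ p ∈ P, ∀ q ∈ P, p * q = q * p := by
    rintro _ ⟨a, ha, b, hb, rfl⟩ _ ⟨c, hc, d, hd, rfl⟩
    exact commute_mul_mul_of_half_commute hhalf ha hb hc hd
  have hle := Algebra.adjoin_le_centralizer_centralizer ℂ P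
  exact fun x hx y hy ↦ Set.centralizer_centralizer_comm_of_comm hgen x (hle hx) y (hle hy)

/-- If `S` is a set of self-adjoint half-commuting elements of a
`*`-algebra `A`, then the subalgebra generated by the products `ab`, `a,b ∈ S`,
is commutative. -/
theorem half_commute_even_subalgebra_commutative
    (A : Type*) [Ring A] [Algebra ℂ A] [StarRing A] (S : Set A)
    (hsa : ∀ a ∈ S, star a = a)
    (hhalf : ∀ a ∈ S, ∀ b ∈ S, ∀ c ∈ S, a * b * c = c * b * a) :
    ∀ x ∈ Algebra.adjoin ℂ {p : A | ∃ a ∈ S, ∃ b ∈ S, p = a * b},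
      ∀ y ∈ Algebra.adjoin ℂ {p : A | ∃ a ∈ S, ∃ b ∈ S, p = a * b},
        x * y = y * x :=
  half_commute_even_subalgebra_commutative_general A S hhalf
end

section
/- Let G ⊆ U(n) be self-transpose, A = R(G), s the transposition-induced automorphism, and let A_*(G) ⊆ A ⋊ ℂℤ₂ be the subalgebra generated by the elements u_{ij}s. Then A_*(G) is noncommutative if and only if G is doubly non-real, i.e. there exist g ∈ G and indices i,j,k,l with g_{ij}·conj(g_{kl}) ∉ ℝ. -/
/-!
The product of two generators collapses to a function: by `S ι(f) = ι(f ∘ σ) S` and `S² = 1`,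
`(u_{ij} S)(u_{kl} S) = u_{ij} · conj u_{kl}`, and the product in the other order is the complex
conjugate of this function. An algebra generated by pairwise commuting elements is commutative, and
`ι` is injective, so `A_*(G)` is commutative exactly when every `g_{ij} · conj g_{kl}` is real.
-/

open Matrix

/-- The coordinate function `u_{ij} : G → ℂ` of a subgroup `G ⊆ U(n)`. -/
def coordFun (n : ℕ) (G : Subgroup (Matrix.unitaryGroup (Fin n) ℂ)) (i j : Fin n) :
    G → ℂ :=
  fun g => ((g : Matrix.unitaryGroup (Fin n) ℂ) : Matrix (Fin n) (Fin n) ℂ) i j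

theorem Algebra.forall_mem_adjoin_mul_comm_iff (R : Type*) {A : Type*} [CommSemiring R]
    [Semiring A] [Algebra R A] {s : Set A} :
    (∀ x ∈ Algebra.adjoin R s, ∀ y ∈ Algebra.adjoin R s, x * y = y * x) ↔
      ∀ x ∈ s, ∀ y ∈ s, x * y = y * x := by
  refine ⟨fun h x hx y hy => h x (Algebra.subset_adjoin hx) y (Algebra.subset_adjoin hy),
    fun h x hx y hy => ?_⟩
  have hle := Algebra.adjoin_le_centralizer_centralizer R s
  exact Set.centralizer_centralizer_comm_of_comm h x (hle hx) y (hle hy)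

theorem Complex.mul_conj_eq_swap_iff_im_eq_zero (z w : ℂ) :
    z * (starRingEnd ℂ) w = w * (starRingEnd ℂ) z ↔ (z * (starRingEnd ℂ) w).im = 0 := by
  have hconj : (starRingEnd ℂ) (z * (starRingEnd ℂ) w) = w * (starRingEnd ℂ) z := by
    rw [map_mul, Complex.conj_conj, mul_comm]
  rw [← Complex.conj_eq_iff_im, hconj, eq_comm]

theorem twisted_mul_twisted {A B F : Type*} [Mul A] [Monoid B] [FunLike F A B]
    [MulHomClass F A B] (ι : F) (σ : A → A) {S : B} (hS2 : S * S = 1)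
    (hcross : ∀ a, S * ι a = ι (σ a) * S) (a b : A) :
    (ι a * S) * (ι b * S) = ι (a * σ b) := by
  rw [mul_assoc, ← mul_assoc S, hcross, mul_assoc, hS2, mul_one, map_mul]

theorem coordFun_comp_eq_star {n : ℕ} {G : Subgroup (Matrix.unitaryGroup (Fin n) ℂ)}
    {σG : G → G}
    (hσG : ∀ g : G,
      ((σG g : Matrix.unitaryGroup (Fin n) ℂ) : Matrix (Fin n) (Fin n) ℂ)
        = ((g : Matrix.unitaryGroup (Fin n) ℂ) : Matrix (Fin n) (Fin n) ℂ).map (starRingEnd ℂ))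
    (i j : Fin n) :
    coordFun n G i j ∘ σG = star (coordFun n G i j) := by
  funext g
  simp only [Function.comp_apply, coordFun, hσG g]
  rfl

theorem halfLiberated_noncommutative_iff_doubly_nonreal_general
    (n : ℕ) (G : Subgroup (Matrix.unitaryGroup (Fin n) ℂ))
    (σG : G ≃* G)
    (hσG : ∀ g : G,
      ((σG g : Matrix.unitaryGroup (Fin n) ℂ) : Matrix (Fin n) (Fin n) ℂ)
        = ((g : Matrix.unitaryGroup (Fin n) ℂ) : Matrix (Fin n) (Fin n) ℂ).map (starRingEnd ℂ))
    (B : Type*) [Ring B] [Algebra ℂ B]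
    (ι : (G → ℂ) →ₐ[ℂ] B)
    (S : B) (hS2 : S * S = 1)
    (hcross : ∀ f : G → ℂ, S * ι f = ι (f ∘ σG) * S)
    (hfree : ∀ f g : G → ℂ, ι f + ι g * S = 0 → f = 0 ∧ g = 0) :
    (¬ ∀ x ∈ Algebra.adjoin ℂ {b : B | ∃ i j : Fin n, b = ι (coordFun n G i j) * S},
        ∀ y ∈ Algebra.adjoin ℂ {b : B | ∃ i j : Fin n, b = ι (coordFun n G i j) * S},
          x * y = y * x)
      ↔ ∃ g ∈ G, ∃ i j k l : Fin n,
          ((g : Matrix (Fin n) (Fin n) ℂ) i j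
            * (starRingEnd ℂ) ((g : Matrix (Fin n) (Fin n) ℂ) k l)).im ≠ 0 := by
  have hinj : Function.Injective ι :=
    (injective_iff_map_eq_zero ι).2 fun f hf => (hfree f 0 (by simp [hf])).1
  have hgen (i j k l : Fin n) :
      (ι (coordFun n G i j) * S) * (ι (coordFun n G k l) * S)
        = ι (coordFun n G i j * star (coordFun n G k l)) := by
    rw [twisted_mul_twisted ι (· ∘ σG) hS2 hcross, coordFun_comp_eq_star hσG]
  have hcomm (i j k l : Fin n) :
      (ι (coordFun n G i j) * S) * (ι (coordFun n G k l) * S)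
          = (ι (coordFun n G k l) * S) * (ι (coordFun n G i j) * S) ↔
        ∀ g : G, (coordFun n G i j g * (starRingEnd ℂ) (coordFun n G k l g)).im = 0 := by
    rw [hgen, hgen, hinj.eq_iff, funext_iff]
    exact forall_congr' fun g => Complex.mul_conj_eq_swap_iff_im_eq_zero _ _
  rw [Algebra.forall_mem_adjoin_mul_comm_iff, not_iff_comm]
  push Not
  constructor
  · rintro hreal _ ⟨i, j, rfl⟩ _ ⟨k, l, rfl⟩
    exact (hcomm i j k l).2 fun g => hreal g g.2 i j k l
  · intro hgens g hg i j k l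
    exact (hcomm i j k l).1 (hgens _ ⟨i, j, rfl⟩ _ ⟨k, l, rfl⟩) ⟨g, hg⟩

/-- Let `G ⊆ U(n)` be a compact self-transpose subgroup, with
transposition automorphism `σG : g ↦ ḡ`. Model the crossed product
`R(G) ⋊ ℂℤ₂` inside an ambient algebra `B`: `ι` embeds the functions on `G`,
and the group-like element `S` satisfies `S² = 1`, `S* = S`,
`S·ι(f) = ι(f ∘ σG)·S`, with the components `ι(f) + ι(g)·S` independent.
Then the subalgebra `A_*(G)` generated by the elements `u_{ij}·S` is
noncommutative iff `G` is doubly non-real, i.e. iff there are `g ∈ G` and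
indices `i,j,k,l` with `g_{ij}·conj(g_{kl}) ∉ ℝ`. -/
theorem halfLiberated_noncommutative_iff_doubly_nonreal
    (n : ℕ) (G : Subgroup (Matrix.unitaryGroup (Fin n) ℂ))
    (hcompact : IsCompact (G : Set (Matrix.unitaryGroup (Fin n) ℂ)))
    (σG : G ≃* G)
    (hσG : ∀ g : G,
      ((σG g : Matrix.unitaryGroup (Fin n) ℂ) : Matrix (Fin n) (Fin n) ℂ)
        = ((g : Matrix.unitaryGroup (Fin n) ℂ) : Matrix (Fin n) (Fin n) ℂ).map (starRingEnd ℂ))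
    (B : Type*) [Ring B] [Algebra ℂ B] [StarRing B]
    (ι : (G → ℂ) →ₐ[ℂ] B) (hstarι : ∀ f : G → ℂ, star (ι f) = ι (star f))
    (S : B) (hS2 : S * S = 1) (hSstar : star S = S)
    (hcross : ∀ f : G → ℂ, S * ι f = ι (f ∘ σG) * S)
    (hfree : ∀ f g : G → ℂ, ι f + ι g * S = 0 → f = 0 ∧ g = 0) :
    (¬ ∀ x ∈ Algebra.adjoin ℂ {b : B | ∃ i j : Fin n, b = ι (coordFun n G i j) * S},
        ∀ y ∈ Algebra.adjoin ℂ {b : B | ∃ i j : Fin n, b = ι (coordFun n G i j) * S},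
          x * y = y * x)
      ↔ ∃ g ∈ G, ∃ i j k l : Fin n,
          ((g : Matrix (Fin n) (Fin n) ℂ) i j
            * (starRingEnd ℂ) ((g : Matrix (Fin n) (Fin n) ℂ) k l)).im ≠ 0 :=
  halfLiberated_noncommutative_iff_doubly_nonreal_general n G σG hσG B ι S hS2 hcross hfree
end

section
/- The map φ from the free *-algebra on 2n² self-adjoint generators to A_u(n) defined by sending generators to (u_{ij}+u_{ij}*)/2 and (u_{ij}−u_{ij}*)/(2ω) (ω a primitive 4th root of unity) realizes the standard generators of A_u(n) as ℂ-linear combinations x_{ij} + ω·x_{n+i,j} of 2n×2n 'orthogonal-type' self-adjoint elements; concretely: in any *-algebra generated by elements u_{ij} with u = (u_{ij}) and ū = (u_{ij}*) unitary, the real and imaginary parts a_{ij} = (u_{ij}+u_{ij}*)/2, b_{ij} = (u_{ij}−u_{ij}*)/(2ω) assemble into a 2n×2n self-adjoint matrix [[a, −b],[b, a]] which is orthogonal (equals its own transpose-inverse). -/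
/-!
Entrywise `u = a + i b` and `ū = a - i b`, so the diagonal blocks of `x xᵀ` are
`a aᵀ + b bᵀ = (u ūᵀ + ū uᵀ) / 2` and the off-diagonal ones `±(a bᵀ - b aᵀ) = ±(ū uᵀ - u ūᵀ) / (2i)`.
Unitarity of `u` and `ū` says `u ūᵀ = ū uᵀ = 1`, giving `1` and `0`; likewise `xᵀ x = 1` follows from
`uᵀ ū = ūᵀ u = 1`.
-/

open Matrix

section ComplexAlgebra

/- With `w = star v` these are the real and imaginary parts of `v`; keeping `w` free lets them be
applied to matrices, whose entrywise conjugate is not `star`. -/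
noncomputable def rePart {M : Type*} [AddCommGroup M] [Module ℂ M] (v w : M) : M :=
  (1 / 2 : ℂ) • (v + w)

noncomputable def imPart {M : Type*} [AddCommGroup M] [Module ℂ M] (v w : M) : M :=
  (2 * Complex.I)⁻¹ • (v - w)

variable {A : Type*} [Ring A] [Algebra ℂ A]

lemma rePart_mul_rePart_add_imPart_mul_imPart (v v' w w' : A) :
    rePart v v' * rePart w w' + imPart v v' * imPart w w' = (1 / 2 : ℂ) • (v * w' + v' * w) := by
  have hI : ((2 : ℂ) * Complex.I)⁻¹ * (2 * Complex.I)⁻¹ = -(1 / 4) := by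
    rw [← mul_inv, mul_mul_mul_comm, Complex.I_mul_I]; norm_num
  simp only [rePart, imPart, smul_mul_smul_comm, hI, add_mul, mul_add, sub_mul, mul_sub]
  module

lemma rePart_mul_imPart_sub_imPart_mul_rePart (v v' w w' : A) :
    rePart v v' * imPart w w' - imPart v v' * rePart w w' =
      (2 * Complex.I)⁻¹ • (v' * w - v * w') := by
  simp only [rePart, imPart, smul_mul_smul_comm, add_mul, mul_add, sub_mul, mul_sub]
  module

lemma rePart_mul_rePart_add_imPart_mul_imPart_eq_one {v v' w w' : A} (h : v * w' = 1)
    (h' : v' * w = 1) : rePart v v' * rePart w w' + imPart v v' * imPart w w' = 1 := by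
  rw [rePart_mul_rePart_add_imPart_mul_imPart, h, h', ← two_smul ℂ, smul_smul]
  norm_num

lemma rePart_mul_imPart_eq_imPart_mul_rePart {v v' w w' : A} (h : v * w' = 1)
    (h' : v' * w = 1) : rePart v v' * imPart w w' = imPart v v' * rePart w w' := by
  rw [← sub_eq_zero, rePart_mul_imPart_sub_imPart_mul_rePart, h, h', sub_self, smul_zero]

variable [StarRing A] [StarModule ℂ A]

lemma isSelfAdjoint_rePart_star (v : A) : IsSelfAdjoint (rePart v (star v)) := by
  simp [IsSelfAdjoint, rePart, star_smul, add_comm]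

lemma isSelfAdjoint_imPart_star (v : A) : IsSelfAdjoint (imPart v (star v)) := by
  have : star ((2 * Complex.I)⁻¹ : ℂ) = -(2 * Complex.I)⁻¹ := by
    simp [Complex.conj_I]
  rw [IsSelfAdjoint, imPart, star_smul, star_sub, star_star, this, neg_smul, ← smul_neg, neg_sub]

end ComplexAlgebra

section Matrix

variable {m n R : Type*}

lemma transpose_rePart [AddCommGroup R] [Module ℂ R] (M N : Matrix m n R) :
    (rePart M N)ᵀ = rePart Mᵀ Nᵀ := by
  simp [rePart]

lemma transpose_imPart [AddCommGroup R] [Module ℂ R] (M N : Matrix m n R) :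
    (imPart M N)ᵀ = imPart Mᵀ Nᵀ := by
  simp [imPart]

variable [Fintype m] [DecidableEq m] [Ring R]

lemma fromBlocks_neg_mul_transpose_eq_one {P Q : Matrix m m R}
    (h₁ : P * Pᵀ + Q * Qᵀ = 1) (h₂ : P * Qᵀ = Q * Pᵀ) :
    fromBlocks P (-Q) Q P * (fromBlocks P (-Q) Q P)ᵀ = 1 := by
  rw [fromBlocks_transpose, fromBlocks_multiply, ← fromBlocks_one]
  simp only [transpose_neg, Matrix.neg_mul, Matrix.mul_neg, neg_neg, h₁, h₂, add_neg_cancel,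
    add_comm (Q * Qᵀ)]

lemma transpose_fromBlocks_neg_mul_eq_one {P Q : Matrix m m R}
    (h₁ : Pᵀ * P + Qᵀ * Q = 1) (h₂ : Pᵀ * Q = Qᵀ * P) :
    (fromBlocks P (-Q) Q P)ᵀ * fromBlocks P (-Q) Q P = 1 := by
  have := fromBlocks_neg_mul_transpose_eq_one (P := Pᵀ) (Q := -Qᵀ) (by simpa) (by simp [h₂])
  simpa [fromBlocks_transpose] using this

end Matrix

/-- In any `*`-algebra generated by elements `u_{ij}` such that
`u = (u_{ij})` and `ū = (u_{ij}*)` are unitary, the real and imaginary parts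
`a_{ij} = (u_{ij} + u_{ij}*)/2`, `b_{ij} = (u_{ij} − u_{ij}*)/(2i)` assemble
into a `2n × 2n` matrix `[[a, −b], [b, a]]` with self-adjoint entries which is
orthogonal: `x xᵀ = 1 = xᵀ x`. -/
theorem unitary_real_imaginary_parts_orthogonal
    (n : ℕ) (B : Type*) [Ring B] [Algebra ℂ B] [StarRing B] [StarModule ℂ B]
    (u : Fin n → Fin n → B)
    (h1 : ∀ i j, ∑ k, u i k * star (u j k) = if i = j then (1 : B) else 0)
    (h2 : ∀ i j, ∑ k, star (u k i) * u k j = if i = j then (1 : B) else 0)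
    (h3 : ∀ i j, ∑ k, star (u i k) * u j k = if i = j then (1 : B) else 0)
    (h4 : ∀ i j, ∑ k, u k i * star (u k j) = if i = j then (1 : B) else 0) :
    ∀ (a b : Fin n → Fin n → B),
      (∀ i j, a i j = ((1 : ℂ)/2) • (u i j + star (u i j))) →
      (∀ i j, b i j = (2 * Complex.I)⁻¹ • (u i j - star (u i j))) →
      ∀ x : Matrix (Fin n ⊕ Fin n) (Fin n ⊕ Fin n) B,
        x = Matrix.fromBlocks (Matrix.of a) (-(Matrix.of b)) (Matrix.of b) (Matrix.of a) →
        (∀ p q, star (x p q) = x p q) ∧ x * xᵀ = 1 ∧ xᵀ * x = 1 := by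
  intro a b ha hb x rfl
  set U := Matrix.of u
  set V := U.map star
  have hUV : U * Vᵀ = 1 := by ext i j; simpa [U, V, mul_apply, one_apply] using h1 i j
  have hVtU : Vᵀ * U = 1 := by ext i j; simpa [U, V, mul_apply, one_apply] using h2 i j
  have hVU : V * Uᵀ = 1 := by ext i j; simpa [U, V, mul_apply, one_apply] using h3 i j
  have hUtV : Uᵀ * V = 1 := by ext i j; simpa [U, V, mul_apply, one_apply] using h4 i j
  have ha' : Matrix.of a = rePart U V := by ext i j; simp [U, V, rePart, ha]
  have hb' : Matrix.of b = imPart U V := by ext i j; simp [U, V, imPart, hb]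
  refine ⟨?_, ?_, ?_⟩
  · have hsa (i j) : star (a i j) = a i j := by rw [ha]; exact isSelfAdjoint_rePart_star _
    have hsb (i j) : star (b i j) = b i j := by rw [hb]; exact isSelfAdjoint_imPart_star _
    rintro (i | i) (j | j) <;> simp [hsa, hsb]
  · rw [ha', hb']
    apply fromBlocks_neg_mul_transpose_eq_one <;> rw [transpose_rePart, transpose_imPart]
    exacts [rePart_mul_rePart_add_imPart_mul_imPart_eq_one hUV hVU,
      rePart_mul_imPart_eq_imPart_mul_rePart hUV hVU]
  · rw [ha', hb']
    apply transpose_fromBlocks_neg_mul_eq_one <;> rw [transpose_rePart, transpose_imPart]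
    exacts [rePart_mul_rePart_add_imPart_mul_imPart_eq_one hUtV hVtU,
      rePart_mul_imPart_eq_imPart_mul_rePart hUtV hVtU]
end
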